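/- arXiv:2504.04720 — 3 statements merged into one kernel-verified Lean document; each statement's English description precedes it below -/
import Mathlib

section
/- Let A be a bounded nonempty subset of an Ahlfors regular metric measure space (X, d, μ) of dimension Q, and let δ > 0. The distance zeta function ζ_A(s) = ∫_{A_δ} d(x,A)^{s−Q} dμ(x) is holomorphic (complex differentiable) on the open half-plane { s ∈ ℂ : Re s > dim̄_B A }, and for every s in this half-plane its complex derivative is ζ_A′(s) = ∫_{A_δ} d(x,A)^{s−Q} log d(x,A) dμ(x). -/
open MeasureTheory Metric Filter Set Topology ENNReal

noncomputable section

/-- `(X, d, μ)` is an Ahlfors regular metric measure space of dimension `Q`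
with regularity constant `K`:  `K⁻¹ r^Q ≤ μ(B̄(x,r)) ≤ K r^Q` for all `x` and
all `0 < r ≤ diam X`. -/
def IsAhlfors {X : Type*} [MetricSpace X] [MeasurableSpace X] (μ : Measure X)
    (Q K : ℝ) : Prop :=
  1 ≤ K ∧ ∀ (x : X) (r : ℝ), 0 < r → ENNReal.ofReal r ≤ EMetric.diam (univ : Set X) →
    ENNReal.ofReal (K⁻¹ * r ^ Q) ≤ μ (closedBall x r) ∧
      μ (closedBall x r) ≤ ENNReal.ofReal (K * r ^ Q)

/-- The upper `r`-dimensional Minkowski content of `A`, relative to the ambient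
dimension `Q`:  `M^{*r}(A) = limsup_{t→0⁺} μ(A_t) / t^(Q-r)`, where
`A_t = cthickening t A` is the closed `t`-neighborhood of `A`. -/
def uContent {X : Type*} [MetricSpace X] [MeasurableSpace X] (μ : Measure X)
    (Q r : ℝ) (A : Set X) : ℝ≥0∞ :=
  Filter.limsup (fun t : ℝ => μ (cthickening t A) / ENNReal.ofReal (t ^ (Q - r))) (𝓝[>] 0)

/-- The lower `r`-dimensional Minkowski content of `A`. -/
def lContent {X : Type*} [MetricSpace X] [MeasurableSpace X] (μ : Measure X)
    (Q r : ℝ) (A : Set X) : ℝ≥0∞ :=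
  Filter.liminf (fun t : ℝ => μ (cthickening t A) / ENNReal.ofReal (t ^ (Q - r))) (𝓝[>] 0)

/-- The upper Minkowski dimension `dim̄_B A = inf { r ≥ 0 : M^{*r}(A) = 0 }`. -/
def uDimB {X : Type*} [MetricSpace X] [MeasurableSpace X] (μ : Measure X)
    (Q : ℝ) (A : Set X) : ℝ :=
  sInf {r : ℝ | 0 ≤ r ∧ uContent μ Q r A = 0}

/-- The lower Minkowski dimension. -/
def lDimB {X : Type*} [MetricSpace X] [MeasurableSpace X] (μ : Measure X)
    (Q : ℝ) (A : Set X) : ℝ :=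
  sInf {r : ℝ | 0 ≤ r ∧ lContent μ Q r A = 0}

/-!
Pick `r < Re s` with `M^{*r}(A) = 0`, so that `μ(A_t) ≤ t^(Q-r)` for small `t`. Summing over the
dyadic shells `2^(-k-1) t₀ < d(x,A) ≤ 2^(-k) t₀` shows that `d(x,A)^p` is integrable on `A_δ` for
every `p > r - Q`. Since `|log d| ≤ (d^ε + d^(-ε))/ε`, the `z`-derivative `d^(z-Q) log d` of the
integrand is dominated, for `z` near `s`, by a sum of two such powers, and one differentiates under
the integral sign.
-/

theorem Real.rpow_le_rpow_add_rpow {x a w b : ℝ} (hx : 0 < x) (haw : a ≤ w) (hwb : w ≤ b) :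
    x ^ w ≤ x ^ a + x ^ b := by
  rcases le_total x 1 with hx1 | hx1
  · linarith [Real.rpow_le_rpow_of_exponent_ge hx hx1 haw, Real.rpow_nonneg hx.le b]
  · linarith [Real.rpow_le_rpow_of_exponent_le hx1 hwb, Real.rpow_nonneg hx.le a]

theorem Real.abs_log_le_rpow_add_rpow_neg {x ε : ℝ} (hx : 0 ≤ x) (hε : 0 < ε) :
    |Real.log x| ≤ (x ^ ε + x ^ (-ε)) / ε := by
  have hlog : Real.log x ≤ x ^ ε / ε := Real.log_le_rpow_div hx hε
  have hlog_inv : -Real.log x ≤ x ^ (-ε) / ε := by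
    rw [← Real.log_inv, Real.rpow_neg hx, ← Real.inv_rpow hx]
    exact Real.log_le_rpow_div (inv_nonneg.2 hx) hε
  have : 0 ≤ x ^ ε / ε := by positivity
  have : 0 ≤ x ^ (-ε) / ε := by positivity
  rw [add_div, abs_le]
  constructor <;> linarith

theorem Real.rpow_mul_abs_log_le {x ε a w b : ℝ} (hx : 0 ≤ x) (hε : 0 < ε) (haw : a + ε ≤ w)
    (hwb : w + ε ≤ b) : x ^ w * |Real.log x| ≤ 2 / ε * (x ^ a + x ^ b) := by
  rcases hx.eq_or_lt with rfl | hx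
  · simp only [Real.log_zero, abs_zero, mul_zero]
    positivity
  calc x ^ w * |Real.log x| ≤ x ^ w * ((x ^ ε + x ^ (-ε)) / ε) := by
        gcongr; exact Real.abs_log_le_rpow_add_rpow_neg hx.le hε
    _ = (x ^ (w + ε) + x ^ (w + -ε)) / ε := by
        rw [Real.rpow_add hx, Real.rpow_add hx]; ring
    _ ≤ ((x ^ a + x ^ b) + (x ^ a + x ^ b)) / ε := by
        gcongr <;> exact Real.rpow_le_rpow_add_rpow hx (by linarith) (by linarith)
    _ = 2 / ε * (x ^ a + x ^ b) := by ring

theorem Complex.norm_ofReal_cpow_le {x : ℝ} (hx : 0 ≤ x) (w : ℂ) : ‖(x : ℂ) ^ w‖ ≤ x ^ w.re := by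
  simpa [Complex.arg_ofReal_of_nonneg hx, abs_of_nonneg hx] using Complex.norm_cpow_le x w

theorem Complex.norm_ofReal_cpow_mul_log_le {x ε a b : ℝ} (hx : 0 ≤ x) (hε : 0 < ε) {w : ℂ}
    (haw : a + ε ≤ w.re) (hwb : w.re + ε ≤ b) :
    ‖(x : ℂ) ^ w * (Real.log x : ℂ)‖ ≤ 2 / ε * (x ^ a + x ^ b) :=
  calc ‖(x : ℂ) ^ w * (Real.log x : ℂ)‖ ≤ x ^ w.re * |Real.log x| := by
        rw [norm_mul, Complex.norm_real, Real.norm_eq_abs]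
        gcongr
        exact Complex.norm_ofReal_cpow_le hx w
    _ ≤ 2 / ε * (x ^ a + x ^ b) := Real.rpow_mul_abs_log_le hx hε haw hwb

theorem hasDerivAt_ofReal_cpow_sub {x : ℝ} (hx : 0 ≤ x) {z a : ℂ} (h : x ≠ 0 ∨ z ≠ a) :
    HasDerivAt (fun w => (x : ℂ) ^ (w - a)) ((x : ℂ) ^ (z - a) * (Real.log x : ℂ)) z := by
  have h' : (x : ℂ) ≠ 0 ∨ z - a ≠ 0 := h.imp Complex.ofReal_ne_zero.2 sub_ne_zero.2
  simpa [Complex.ofReal_log hx] using ((hasDerivAt_id z).sub_const a).const_cpow h'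

theorem tendsto_ofReal_rpow_nhdsGT_zero {a : ℝ} (ha : 0 < a) :
    Tendsto (fun t : ℝ => ENNReal.ofReal (t ^ a)) (𝓝[>] 0) (𝓝 0) := by
  have h := (Real.continuousAt_rpow_const 0 a (Or.inr ha.le)).tendsto.mono_left
    (nhdsWithin_le_nhds (s := Ioi 0))
  simpa [Function.comp_def, Real.zero_rpow ha.ne'] using (ENNReal.continuous_ofReal.tendsto _).comp h

theorem ofReal_rpow_le_add_tsum_indicator {p t₀ y : ℝ} (hp : p < 0) (ht₀ : 0 < t₀) (hy : 0 ≤ y) :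
    ENNReal.ofReal (y ^ p) ≤ ENNReal.ofReal (t₀ ^ p) + ∑' k : ℕ,
      (Iic (t₀ * 2⁻¹ ^ k)).indicator (fun _ => ENNReal.ofReal ((t₀ * 2⁻¹ ^ (k + 1)) ^ p)) y := by
  rcases hy.eq_or_lt with rfl | hy
  · simp [Real.zero_rpow hp.ne]
  rcases le_or_gt y t₀ with hyt | hyt
  · obtain ⟨k, hk, hk'⟩ := exists_nat_pow_near_of_lt_one (div_pos hy ht₀)
      ((div_le_one ht₀).2 hyt) (by norm_num : (0 : ℝ) < 2⁻¹) (by norm_num)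
    rw [lt_div_iff₀ ht₀, mul_comm] at hk
    rw [div_le_iff₀ ht₀, mul_comm] at hk'
    refine le_add_left (le_trans ?_ (ENNReal.le_tsum k))
    rw [indicator_of_mem (mem_Iic.2 hk')]
    exact ENNReal.ofReal_le_ofReal (Real.rpow_le_rpow_of_nonpos (by positivity) hk.le hp.le)
  · exact le_add_right (ENNReal.ofReal_le_ofReal (Real.rpow_le_rpow_of_nonpos ht₀ hyt.le hp.le))

theorem rpow_mul_rpow_of_dyadic {t₀ p a : ℝ} (ht₀ : 0 < t₀) (k : ℕ) :
    (t₀ * 2⁻¹ ^ (k + 1)) ^ p * (t₀ * 2⁻¹ ^ k) ^ a =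
      2⁻¹ ^ p * t₀ ^ (p + a) * (2⁻¹ ^ (p + a)) ^ k := by
  have hu : 0 < t₀ * 2⁻¹ ^ k := by positivity
  rw [pow_succ, ← mul_assoc, Real.mul_rpow hu.le (by norm_num), mul_assoc, mul_comm _ (_ ^ a),
    ← mul_assoc, ← Real.rpow_add hu, Real.mul_rpow ht₀.le (by positivity), ← Real.rpow_natCast,
    ← Real.rpow_natCast (2⁻¹ ^ (p + a)), ← Real.rpow_mul (by norm_num),
    ← Real.rpow_mul (by norm_num), mul_comm (k : ℝ)]
  ring

theorem lintegral_rpow_lt_top_of_measure_le {α : Type*} [MeasurableSpace α] {ν : Measure α}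
    [IsFiniteMeasure ν] {φ : α → ℝ} (hφ : Measurable φ) (hφ0 : ∀ x, 0 ≤ φ x) {a p : ℝ}
    (hp : p < 0) (hpa : 0 < p + a)
    (hsmall : ∀ᶠ t in 𝓝[>] 0, ν {x | φ x ≤ t} ≤ ENNReal.ofReal (t ^ a)) :
    ∫⁻ x, ENNReal.ofReal (φ x ^ p) ∂ν < ⊤ := by
  obtain ⟨t₀, ht₀ : 0 < t₀, hsub⟩ := mem_nhdsGT_iff_exists_Ioc_subset.1 hsmall
  set u : ℕ → ℝ := fun k => t₀ * 2⁻¹ ^ k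
  have hshell : ∀ k, ENNReal.ofReal (u (k + 1) ^ p) * ν {x | φ x ≤ u k} ≤
      ENNReal.ofReal (2⁻¹ ^ p * t₀ ^ (p + a)) * ENNReal.ofReal (2⁻¹ ^ (p + a)) ^ k := by
    intro k
    have hu_le : u k ≤ t₀ :=
      mul_le_of_le_one_right ht₀.le (pow_le_one₀ (by norm_num) (by norm_num))
    calc ENNReal.ofReal (u (k + 1) ^ p) * ν {x | φ x ≤ u k}
        ≤ ENNReal.ofReal (u (k + 1) ^ p) * ENNReal.ofReal (u k ^ a) := by
          gcongr; exact hsub ⟨by positivity, hu_le⟩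
      _ = _ := by
        rw [← ENNReal.ofReal_mul (by positivity), rpow_mul_rpow_of_dyadic ht₀,
          ENNReal.ofReal_mul (by positivity), ENNReal.ofReal_pow (by positivity)]
  have hratio : ENNReal.ofReal (2⁻¹ ^ (p + a)) < 1 :=
    ENNReal.ofReal_lt_one.2 (Real.rpow_lt_one (by norm_num) (by norm_num) hpa)
  have hmeas : ∀ k, MeasurableSet {x | φ x ≤ u k} := fun k => measurableSet_le hφ measurable_const
  calc ∫⁻ x, ENNReal.ofReal (φ x ^ p) ∂ν
      ≤ ∫⁻ x, (ENNReal.ofReal (t₀ ^ p) +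
          ∑' k, {x | φ x ≤ u k}.indicator (fun _ => ENNReal.ofReal (u (k + 1) ^ p)) x) ∂ν :=
        lintegral_mono fun x => ofReal_rpow_le_add_tsum_indicator hp ht₀ (hφ0 x)
    _ = ENNReal.ofReal (t₀ ^ p) * ν univ +
          ∑' k, ENNReal.ofReal (u (k + 1) ^ p) * ν {x | φ x ≤ u k} := by
        rw [lintegral_add_left measurable_const, lintegral_const,
          lintegral_tsum fun k => (measurable_const.indicator (hmeas k)).aemeasurable]
        simp_rw [lintegral_indicator_const (hmeas _)]
    _ ≤ ENNReal.ofReal (t₀ ^ p) * ν univ + ∑' k : ℕ,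
          ENNReal.ofReal (2⁻¹ ^ p * t₀ ^ (p + a)) * ENNReal.ofReal (2⁻¹ ^ (p + a)) ^ k := by
        gcongr ENNReal.ofReal (t₀ ^ p) * ν univ + ?_
        exact ENNReal.tsum_le_tsum hshell
    _ < ⊤ := by
        rw [ENNReal.tsum_mul_left, ENNReal.tsum_geometric]
        exact ENNReal.add_lt_top.2 ⟨ENNReal.mul_lt_top ENNReal.ofReal_lt_top (measure_lt_top _ _),
          ENNReal.mul_lt_top ENNReal.ofReal_lt_top (ENNReal.inv_lt_top.2 (tsub_pos_of_lt hratio))⟩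

section DistanceZeta

variable {X : Type*} [MetricSpace X]

theorem mem_cthickening_iff_infDist_le {A : Set X} (hA : A.Nonempty) {t : ℝ} (ht : 0 ≤ t)
    {x : X} : x ∈ cthickening t A ↔ infDist x A ≤ t := by
  rw [mem_cthickening_iff, ENNReal.le_ofReal_iff_toReal_le (infEDist_ne_top hA) ht]
  rfl

variable [MeasurableSpace X]

theorem IsAhlfors.measure_closedBall_lt_top [Nontrivial X] {μ : Measure X} {Q K : ℝ}
    (h : IsAhlfors μ Q K) (x : X) {R : ℝ} (hR : 0 < R) : μ (closedBall x R) < ⊤ := by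
  by_cases hRD : ENNReal.ofReal R ≤ ediam (univ : Set X)
  · exact (h.2 x R hR hRD).2.trans_lt ENNReal.ofReal_lt_top
  rw [not_le] at hRD
  have hD_top : ediam (univ : Set X) ≠ ⊤ := (hRD.trans ENNReal.ofReal_lt_top).ne
  have hD_pos : 0 < diam (univ : Set X) :=
    ENNReal.toReal_pos (ediam_pos_iff.2 nontrivial_univ).ne' hD_top
  have hball : closedBall x R ⊆ closedBall x (diam (univ : Set X)) := fun y _ =>
    mem_closedBall.2 (dist_le_diam_of_mem (isBounded_iff_ediam_ne_top.2 hD_top) trivial trivial)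
  exact (measure_mono hball).trans_lt ((h.2 x _ hD_pos ENNReal.ofReal_toReal_le).2.trans_lt
    ENNReal.ofReal_lt_top)

theorem IsAhlfors.measure_lt_top_of_isBounded [Nontrivial X] {μ : Measure X} {Q K : ℝ}
    (h : IsAhlfors μ Q K) {s : Set X} (hs : Bornology.IsBounded s) : μ s < ⊤ := by
  obtain ⟨x⟩ := (inferInstance : Nonempty X)
  obtain ⟨R, hR, hsR⟩ := hs.subset_closedBall_lt 0 x
  exact (measure_mono hsR).trans_lt (h.measure_closedBall_lt_top x hR)

variable {μ : Measure X} {A : Set X} {Q r : ℝ}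

theorem uContent_eq_zero_of_lt {δ : ℝ} (hδ : 0 < δ) (hμ : μ (cthickening δ A) ≠ ⊤)
    (hQr : Q < r) : uContent μ Q r A = 0 := by
  have hlim : Tendsto (fun t => μ (cthickening δ A) * ENNReal.ofReal (t ^ (r - Q)))
      (𝓝[>] 0) (𝓝 0) := by
    simpa using ENNReal.Tendsto.const_mul (tendsto_ofReal_rpow_nhdsGT_zero (sub_pos.2 hQr))
      (Or.inr hμ)
  refine le_antisymm ((limsup_le_limsup ?_).trans_eq hlim.limsup_eq) zero_le
  filter_upwards [Ioc_mem_nhdsGT hδ] with t ⟨ht0, htδ⟩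
  rw [div_eq_mul_inv, ← ENNReal.ofReal_inv_of_pos (by positivity), ← Real.rpow_neg ht0.le,
    neg_sub]
  gcongr
  exact cthickening_mono htδ A

theorem exists_uContent_eq_zero_of_uDimB_lt {δ : ℝ} (hδ : 0 < δ)
    (hμ : μ (cthickening δ A) ≠ ⊤) {σ : ℝ} (h : uDimB μ Q A < σ) :
    ∃ r < σ, uContent μ Q r A = 0 := by
  have hnonempty : {r : ℝ | 0 ≤ r ∧ uContent μ Q r A = 0}.Nonempty :=
    ⟨|Q| + 1, by positivity, uContent_eq_zero_of_lt hδ hμ (by linarith [le_abs_self Q])⟩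
  obtain ⟨r, ⟨-, hr⟩, hrσ⟩ := (csInf_lt_iff ⟨0, fun _ hr => hr.1⟩ hnonempty).1 h
  exact ⟨r, hrσ, hr⟩

theorem eventually_measure_cthickening_le (h : uContent μ Q r A = 0) :
    ∀ᶠ t in 𝓝[>] 0, μ (cthickening t A) ≤ ENNReal.ofReal (t ^ (Q - r)) := by
  have hlt : ∀ᶠ t in 𝓝[>] (0 : ℝ), μ (cthickening t A) / ENNReal.ofReal (t ^ (Q - r)) < 1 :=
    eventually_lt_of_limsup_lt (show limsup _ _ < 1 from h.trans_lt zero_lt_one)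
  filter_upwards [hlt, self_mem_nhdsWithin] with t ht (ht0 : 0 < t)
  rw [ENNReal.div_lt_iff (Or.inl (by positivity)) (Or.inl ENNReal.ofReal_ne_top), one_mul] at ht
  exact ht.le

theorem measure_closure_eq_zero_of_uContent_eq_zero (h : uContent μ Q r A = 0) (hrQ : r < Q) :
    μ (closure A) = 0 := by
  refine le_antisymm (ge_of_tendsto (tendsto_ofReal_rpow_nhdsGT_zero (sub_pos.2 hrQ)) ?_) zero_le
  filter_upwards [eventually_measure_cthickening_le h] with t ht
  exact (measure_mono (closure_subset_cthickening t A)).trans ht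

theorem ae_infDist_ne_zero_of_uContent_eq_zero (hA : A.Nonempty) (h : uContent μ Q r A = 0)
    (hrQ : r < Q) : ∀ᵐ x ∂μ, infDist x A ≠ 0 := by
  filter_upwards [measure_eq_zero_iff_ae_notMem.1
    (measure_closure_eq_zero_of_uContent_eq_zero h hrQ)] with x hx
  exact fun h0 => hx ((mem_closure_iff_infDist_zero hA).2 h0)

variable [BorelSpace X]

theorem integrableOn_rpow_infDist (hA : A.Nonempty) {δ p : ℝ} (hδ : 0 ≤ δ)
    (hμ : μ (cthickening δ A) ≠ ⊤) (hr : uContent μ Q r A = 0) (hp : r - Q < p) :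
    IntegrableOn (fun x => infDist x A ^ p) (cthickening δ A) μ := by
  have hmeas : Measurable fun x => infDist x A ^ p := measurable_infDist.pow_const p
  rcases le_or_gt 0 p with hp0 | hp0
  · refine Measure.integrableOn_of_bounded (M := δ ^ p) hμ hmeas.aestronglyMeasurable ?_
    filter_upwards [ae_restrict_mem isClosed_cthickening.measurableSet] with x hx
    rw [Real.norm_of_nonneg (Real.rpow_nonneg infDist_nonneg p)]
    exact Real.rpow_le_rpow infDist_nonneg ((mem_cthickening_iff_infDist_le hA hδ).1 hx) hp0
  have : IsFiniteMeasure (μ.restrict (cthickening δ A)) := ⟨by simpa using hμ.lt_top⟩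
  refine ⟨hmeas.aestronglyMeasurable, ?_⟩
  rw [hasFiniteIntegral_iff_ofReal (ae_of_all _ fun x => Real.rpow_nonneg infDist_nonneg p)]
  refine lintegral_rpow_lt_top_of_measure_le measurable_infDist (fun _ => infDist_nonneg) hp0
    (a := Q - r) (by linarith) ?_
  filter_upwards [eventually_measure_cthickening_le hr, self_mem_nhdsWithin] with t ht ht0
  refine (Measure.restrict_apply_le _ _).trans ((measure_mono fun x hx => ?_).trans ht)
  exact (mem_cthickening_iff_infDist_le hA (le_of_lt ht0)).2 hx

def distZeta (μ : Measure X) (A : Set X) (δ Q : ℝ) (z : ℂ) : ℂ :=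
  ∫ x in cthickening δ A, (infDist x A : ℂ) ^ (z - (Q : ℂ)) ∂μ

theorem hasDerivAt_distZeta (hA : A.Nonempty) {δ : ℝ} (hδ : 0 ≤ δ)
    (hμ : μ (cthickening δ A) ≠ ⊤) (hr : uContent μ Q r A = 0) {s : ℂ} (hrs : r < s.re) :
    HasDerivAt (distZeta μ A δ Q)
      (∫ x in cthickening δ A, (infDist x A : ℂ) ^ (s - Q) * (Real.log (infDist x A) : ℂ) ∂μ)
      s := by
  set ε := (s.re - r) / 4 with hε
  have hε_pos : 0 < ε := by linarith
  have hre : ∀ z ∈ ball s ε, |z.re - s.re| < ε := fun z hz => by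
    simpa using (Complex.abs_re_le_norm (z - s)).trans_lt (mem_ball_iff_norm.1 hz)
  have hintegrable : ∀ p, r - Q < p → IntegrableOn (fun x => infDist x A ^ p) (cthickening δ A) μ :=
    fun p hp => integrableOn_rpow_infDist hA hδ hμ hr hp
  have hcpow_meas : ∀ z : ℂ, Measurable fun x => (infDist x A : ℂ) ^ (z - Q) := fun z =>
    (Complex.measurable_ofReal.comp measurable_infDist).pow_const _
  have hF_int : IntegrableOn (fun x => (infDist x A : ℂ) ^ (s - Q)) (cthickening δ A) μ :=
    (hintegrable (s.re - Q) (by linarith)).mono' (hcpow_meas s).aestronglyMeasurable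
      (ae_of_all _ fun x => by simpa using Complex.norm_ofReal_cpow_le infDist_nonneg (s - Q))
  have h_bound : ∀ x, ∀ z ∈ ball s ε,
      ‖(infDist x A : ℂ) ^ (z - Q) * (Real.log (infDist x A) : ℂ)‖ ≤
        2 / ε * (infDist x A ^ (s.re - 2 * ε - Q) + infDist x A ^ (s.re + 2 * ε - Q)) := by
    intro x z hz
    obtain ⟨hz₁, hz₂⟩ := abs_lt.1 (hre z hz)
    exact Complex.norm_ofReal_cpow_mul_log_le infDist_nonneg hε_pos
      (by simp only [Complex.sub_re, Complex.ofReal_re]; linarith)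
      (by simp only [Complex.sub_re, Complex.ofReal_re]; linarith)
  -- `w ↦ 0 ^ (w - Q)` is not differentiable at `Q`: either `d(x,A) ≠ 0` almost everywhere
  -- (when `r < Q`), or `Q` lies outside the ball.
  have h_diff : ∀ᵐ x ∂μ.restrict (cthickening δ A), ∀ z ∈ ball s ε,
      HasDerivAt (fun w : ℂ => (infDist x A : ℂ) ^ (w - Q))
        ((infDist x A : ℂ) ^ (z - Q) * (Real.log (infDist x A) : ℂ)) z := by
    rcases lt_or_ge r Q with hrQ | hQr
    · filter_upwards [ae_restrict_of_ae (ae_infDist_ne_zero_of_uContent_eq_zero hA hr hrQ)]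
        with x hx z _
      exact hasDerivAt_ofReal_cpow_sub infDist_nonneg (Or.inl hx)
    · refine ae_of_all _ fun x z hz =>
        hasDerivAt_ofReal_cpow_sub infDist_nonneg (Or.inr fun hzQ => ?_)
      have := (abs_lt.1 (hre z hz)).1
      rw [hzQ, Complex.ofReal_re] at this
      linarith
  refine (hasDerivAt_integral_of_dominated_loc_of_deriv_le
    (F' := fun z x => (infDist x A : ℂ) ^ (z - Q) * (Real.log (infDist x A) : ℂ))
    (ball_mem_nhds s hε_pos)
    (Eventually.of_forall fun z => (hcpow_meas z).aestronglyMeasurable) hF_int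
    ((hcpow_meas s).mul (Complex.measurable_ofReal.comp
      (Real.measurable_log.comp measurable_infDist))).aestronglyMeasurable
    (ae_of_all _ h_bound) ?_ h_diff).2
  exact ((hintegrable _ (by linarith)).add (hintegrable _ (by linarith))).const_mul _

end DistanceZeta

theorem stmt3_general {X : Type*} [MetricSpace X] [MeasurableSpace X] [BorelSpace X]
    (μ : Measure X) (Q K : ℝ) (hreg : IsAhlfors μ Q K)
    (A : Set X) (hne : A.Nonempty) (hbd : Bornology.IsBounded A)
    (δ : ℝ) (hδ : 0 < δ) (s : ℂ) (hs : uDimB μ Q A < s.re) :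
    HasDerivAt
      (fun z : ℂ => ∫ x in cthickening δ A, (infDist x A : ℂ) ^ (z - (Q : ℂ)) ∂μ)
      (∫ x in cthickening δ A,
        (infDist x A : ℂ) ^ (s - (Q : ℂ)) * (Real.log (infDist x A) : ℂ) ∂μ) s := by
  by_cases hμ : μ (cthickening δ A) = ⊤
  · -- Ahlfors regularity bounds the measure of bounded sets unless `X` is a single point, where
    -- `d(x,A) = 0` makes both integrands constant, so their integrals over a set of infinite
    -- measure vanish.
    have : Subsingleton X := not_nontrivial_iff_subsingleton.1 fun _ =>
      (hreg.measure_lt_top_of_isBounded hbd.cthickening).ne hμ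
    obtain ⟨a, ha⟩ := hne
    have hd : ∀ x, infDist x A = 0 := fun x => Subsingleton.elim a x ▸ infDist_zero_of_mem ha
    simp only [hd, setIntegral_const, measureReal_def, hμ, ENNReal.toReal_top, zero_smul]
    exact hasDerivAt_const s 0
  obtain ⟨r, hrs, hr⟩ := exists_uContent_eq_zero_of_uDimB_lt hδ hμ hs
  exact hasDerivAt_distZeta hne hδ.le hμ hr hrs

/-- The distance zeta function `ζ_A(s) = ∫_{A_δ} d(x,A)^(s-Q) dμ(x)` is holomorphic
on `{ Re s > dim̄_B A }` with derivative `ζ_A'(s) = ∫_{A_δ} d(x,A)^(s-Q) log d(x,A) dμ(x)`. -/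
theorem stmt3 {X : Type*} [MetricSpace X] [MeasurableSpace X] [BorelSpace X]
    (μ : Measure X) (Q K : ℝ) (hQ : 0 < Q) (hreg : IsAhlfors μ Q K)
    (A : Set X) (hne : A.Nonempty) (hbd : Bornology.IsBounded A)
    (δ : ℝ) (hδ : 0 < δ) (s : ℂ) (hs : uDimB μ Q A < s.re) :
    HasDerivAt
      (fun z : ℂ => ∫ x in cthickening δ A, (infDist x A : ℂ) ^ (z - (Q : ℂ)) ∂μ)
      (∫ x in cthickening δ A,
        (infDist x A : ℂ) ^ (s - (Q : ℂ)) * (Real.log (infDist x A) : ℂ) ∂μ) s :=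
  stmt3_general μ Q K hreg A hne hbd δ hδ s hs

end
end

section
/- Let A be a bounded nonempty subset of an Ahlfors regular metric measure space (X, d, μ) of dimension Q, and let δ > 0. Assume the Minkowski dimension D := dim_B A exists (i.e., the upper and lower Minkowski dimensions of A coincide), that D < Q, and that the lower D-dimensional Minkowski content satisfies M_*^D(A) > 0. Then the distance zeta function ζ_A(s) = ∫_{A_δ} d(x,A)^{s−Q} dμ(x) tends to +∞ as the real variable s converges to D from the right. -/
/-! Positivity of the lower Minkowski content gives `μ(A_t) ≥ c t^(Q-D)` for `0 < t ≤ t₀`.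
Abel summation over the dyadic radii `t₀ / 2^k`, which needs only these lower bounds on
`μ(A_t)`, yields `ζ_A(σ) ≥ N c (1 - 2^(σ-Q)) (t₀ / 2^N)^(σ-D)` for all `N` and `D ≤ σ ≤ Q`.
As `σ → D⁺` the right side tends to `N c (1 - 2^(D-Q))`, which is unbounded in `N`. -/

open MeasureTheory Metric Filter Set Topology ENNReal

noncomputable section

namespace ENNReal

theorem rpow_le_rpow_of_nonpos {x y : ℝ≥0∞} {z : ℝ} (hxy : x ≤ y) (hz : z ≤ 0) :
    y ^ z ≤ x ^ z := by
  calc y ^ z = (y ^ (-z))⁻¹ := by rw [← rpow_neg, neg_neg]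
    _ ≤ (x ^ (-z))⁻¹ := ENNReal.inv_le_inv.2 (rpow_le_rpow hxy (neg_nonneg.2 hz))
    _ = x ^ z := by rw [← rpow_neg, neg_neg]

theorem sum_range_tsub_le {g : ℕ → ℝ≥0∞} (hg : Monotone g) (N : ℕ) :
    ∑ k ∈ Finset.range N, (g (k + 1) - g k) ≤ g N := by
  induction N with
  | zero => simp
  | succ N ih =>
    rw [Finset.sum_range_succ]
    calc _ ≤ g N + (g (N + 1) - g N) := by gcongr
      _ = g (N + 1) := add_tsub_cancel_of_le (hg N.le_succ)

end ENNReal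

theorem dyadic_increment_mul (c p q t : ℝ) (ht : 0 < t) :
    ((t / 2) ^ p - t ^ p) * (c * (t / 2) ^ q) = c * (1 - 2 ^ p) * (t / 2) ^ (p + q) := by
  have h2 : t ^ p = 2 ^ p * (t / 2) ^ p := by
    rw [← Real.mul_rpow zero_le_two (by positivity), mul_div_cancel₀ t two_ne_zero]
  rw [h2, Real.rpow_add (by positivity)]
  ring

theorem ofReal_le_rpow_sub_mul {c r σ Q s t : ℝ} {m : ℝ≥0∞} (hc : 0 ≤ c) (ht : 0 < t)
    (hs : 0 < s) (hst : s ≤ t / 2) (hrσ : r ≤ σ) (hσQ : σ ≤ Q)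
    (hm : ENNReal.ofReal (c * (t / 2) ^ (Q - r)) ≤ m) :
    ENNReal.ofReal (c * (1 - 2 ^ (σ - Q)) * s ^ (σ - r)) ≤
      (ENNReal.ofReal ((t / 2) ^ (σ - Q)) - ENNReal.ofReal (t ^ (σ - Q))) * m := by
  have hincr : 0 ≤ (t / 2) ^ (σ - Q) - t ^ (σ - Q) :=
    sub_nonneg.2 (Real.rpow_le_rpow_of_nonpos (by positivity) (half_le_self ht.le)
      (sub_nonpos.2 hσQ))
  rw [← ENNReal.ofReal_sub _ (by positivity)]
  calc ENNReal.ofReal (c * (1 - 2 ^ (σ - Q)) * s ^ (σ - r))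
      ≤ ENNReal.ofReal (((t / 2) ^ (σ - Q) - t ^ (σ - Q)) * (c * (t / 2) ^ (Q - r))) := by
        rw [dyadic_increment_mul c _ _ _ ht, sub_add_sub_cancel]
        refine ENNReal.ofReal_le_ofReal (mul_le_mul_of_nonneg_left ?_ ?_)
        · exact Real.rpow_le_rpow hs.le hst (sub_nonneg.2 hrσ)
        · exact mul_nonneg hc (sub_nonneg.2
            (Real.rpow_le_one_of_one_le_of_nonpos one_le_two (sub_nonpos.2 hσQ)))
    _ ≤ _ := by
        rw [ENNReal.ofReal_mul hincr]
        exact mul_le_mul_right hm _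

section LayerCake

variable {X : Type*} {b : ℕ → ℝ≥0∞} {S : ℕ → Set X} {F : X → ℝ≥0∞}

/- Telescoping the increments of `k ↦ min (b k) (F x)` bounds the sum without any nesting
assumption on the sets `S k`. -/
theorem sum_indicator_tsub_le (hb : Monotone b) (hbF : ∀ k, ∀ x ∈ S k, b k ≤ F x)
    (N : ℕ) (x : X) :
    ∑ k ∈ Finset.range N, (S (k + 1)).indicator (fun _ => b (k + 1) - b k) x ≤ F x := by
  set g : ℕ → ℝ≥0∞ := fun k => min (b k) (F x)
  have hg : Monotone g := hb.min monotone_const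
  calc _ ≤ ∑ k ∈ Finset.range N, (g (k + 1) - g k) := by
        refine Finset.sum_le_sum fun k _ => ?_
        by_cases hx : x ∈ S (k + 1)
        · have hle := hbF (k + 1) x hx
          rw [indicator_of_mem hx, show g (k + 1) = b (k + 1) from min_eq_left hle,
            show g k = b k from min_eq_left ((hb k.le_succ).trans hle)]
        · simp [indicator_of_notMem hx]
    _ ≤ g N := ENNReal.sum_range_tsub_le hg N
    _ ≤ F x := min_le_right _ _

theorem sum_tsub_mul_measure_le_lintegral [MeasurableSpace X] (μ : Measure X)
    (hS : ∀ k, MeasurableSet (S k)) (hb : Monotone b) (hbF : ∀ k, ∀ x ∈ S k, b k ≤ F x)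
    (N : ℕ) :
    ∑ k ∈ Finset.range N, (b (k + 1) - b k) * μ (S (k + 1)) ≤ ∫⁻ x, F x ∂μ := by
  calc _ = ∫⁻ x, ∑ k ∈ Finset.range N, (S (k + 1)).indicator (fun _ => b (k + 1) - b k) x ∂μ := by
        rw [lintegral_finsetSum _ fun k _ => measurable_const.indicator (hS (k + 1))]
        simp only [lintegral_indicator_const (hS _)]
    _ ≤ ∫⁻ x, F x ∂μ := lintegral_mono (sum_indicator_tsub_le hb hbF N)

end LayerCake

section Minkowski

variable {X : Type*} [MetricSpace X] {A : Set X}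

theorem ofReal_rpow_le_ofReal_infDist_rpow {x : X} {t p : ℝ} (ht : 0 < t)
    (hx : x ∈ cthickening t A) (hp : p ≤ 0) :
    ENNReal.ofReal (t ^ p) ≤ ENNReal.ofReal (infDist x A) ^ p := by
  rw [← ENNReal.ofReal_rpow_of_pos ht]
  exact ENNReal.rpow_le_rpow_of_nonpos
    (ENNReal.ofReal_le_ofReal (ENNReal.toReal_le_of_le_ofReal ht.le (mem_cthickening_iff.1 hx))) hp


variable [MeasurableSpace X] {μ : Measure X}

theorem exists_pos_mul_rpow_le_measure_cthickening {Q r : ℝ} (h : 0 < lContent μ Q r A) :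
    ∃ c : ℝ, 0 < c ∧
      ∀ᶠ t in 𝓝[>] 0, ENNReal.ofReal (c * t ^ (Q - r)) ≤ μ (cthickening t A) := by
  obtain ⟨c', hc'0, hc'lt⟩ := exists_between h
  have hc'top : c' ≠ ⊤ := (hc'lt.trans_le le_top).ne
  refine ⟨c'.toReal, ENNReal.toReal_pos hc'0.ne' hc'top, ?_⟩
  filter_upwards [eventually_lt_of_lt_liminf hc'lt, self_mem_nhdsWithin] with t ht ht0
  rw [ENNReal.ofReal_mul ENNReal.toReal_nonneg, ENNReal.ofReal_toReal hc'top]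
  refine (ENNReal.le_div_iff_mul_le (Or.inl ?_) (Or.inl ENNReal.ofReal_ne_top)).1 ht.le
  exact ENNReal.ofReal_pos.2 (Real.rpow_pos_of_pos ht0 _) |>.ne'

theorem ofReal_le_lintegral_infDist_rpow [OpensMeasurableSpace X] {c t₀ δ r σ Q : ℝ}
    (hc : 0 ≤ c) (ht₀ : 0 < t₀) (ht₀δ : t₀ ≤ δ)
    (hlow : ∀ t ∈ Ioc 0 t₀, ENNReal.ofReal (c * t ^ (Q - r)) ≤ μ (cthickening t A))
    (hrσ : r ≤ σ) (hσQ : σ ≤ Q) (N : ℕ) :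
    ENNReal.ofReal (N * (c * (1 - 2 ^ (σ - Q)) * (t₀ / 2 ^ N) ^ (σ - r))) ≤
      ∫⁻ x in cthickening δ A, ENNReal.ofReal (infDist x A) ^ (σ - Q) ∂μ := by
  set u : ℕ → ℝ := fun k => t₀ / 2 ^ k
  have hu : ∀ k, 0 < u k := fun k => by positivity
  have hu_anti : Antitone u := fun j k hjk =>
    div_le_div_of_nonneg_left ht₀.le (by positivity) (pow_le_pow_right₀ one_le_two hjk)
  have hu_le : ∀ k, u k ≤ t₀ := fun k => (hu_anti k.zero_le).trans_eq (by simp [u])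
  have hu_succ : ∀ k, u (k + 1) = u k / 2 := fun k => by simp only [u, pow_succ, div_div]
  set b : ℕ → ℝ≥0∞ := fun k => ENNReal.ofReal (u k ^ (σ - Q))
  have hb : Monotone b := fun j k hjk => ENNReal.ofReal_le_ofReal
    (Real.rpow_le_rpow_of_nonpos (hu k) (hu_anti hjk) (sub_nonpos.2 hσQ))
  have hterm : ∀ k ∈ Finset.range N,
      ENNReal.ofReal (c * (1 - 2 ^ (σ - Q)) * u N ^ (σ - r)) ≤
        (b (k + 1) - b k) * μ.restrict (cthickening δ A) (cthickening (u (k + 1)) A) := by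
    intro k hk
    rw [Measure.restrict_eq_self _ (cthickening_mono ((hu_le _).trans ht₀δ) A)]
    have h := ofReal_le_rpow_sub_mul hc (hu k) (hu N)
      (hu_succ k ▸ hu_anti (Finset.mem_range.1 hk)) hrσ hσQ (hu_succ k ▸ hlow _ ⟨hu _, hu_le _⟩)
    rwa [← hu_succ] at h
  calc _ = (Finset.range N).card • ENNReal.ofReal (c * (1 - 2 ^ (σ - Q)) * u N ^ (σ - r)) := by
        rw [Finset.card_range, nsmul_eq_mul, ENNReal.ofReal_mul (Nat.cast_nonneg N),
          ENNReal.ofReal_natCast]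
    _ ≤ ∑ k ∈ Finset.range N,
          (b (k + 1) - b k) * μ.restrict (cthickening δ A) (cthickening (u (k + 1)) A) :=
        Finset.card_nsmul_le_sum _ _ _ hterm
    _ ≤ _ := sum_tsub_mul_measure_le_lintegral (S := fun k => cthickening (u k) A) _
        (fun k => isClosed_cthickening.measurableSet) hb
        (fun k x hx => ofReal_rpow_le_ofReal_infDist_rpow (hu k) hx (sub_nonpos.2 hσQ)) N

end Minkowski

theorem stmt5_general {X : Type*} [MetricSpace X] [MeasurableSpace X] [BorelSpace X]
    (μ : Measure X) (Q : ℝ)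
    (A : Set X)
    (δ : ℝ) (hδ : 0 < δ)
    (hDQ : uDimB μ Q A < Q)
    (hpos : 0 < lContent μ Q (uDimB μ Q A) A) :
    Tendsto (fun σ : ℝ =>
        ∫⁻ x in cthickening δ A, ENNReal.ofReal (infDist x A) ^ (σ - Q) ∂μ)
      (𝓝[>] (uDimB μ Q A)) (𝓝 ⊤) := by
  set D := uDimB μ Q A
  obtain ⟨c, hc, hlow⟩ := exists_pos_mul_rpow_le_measure_cthickening hpos
  obtain ⟨t₁, ht₁, hlow⟩ := mem_nhdsGT_iff_exists_Ioc_subset.1 hlow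
  set t₀ := min t₁ δ
  have ht₀ : 0 < t₀ := lt_min ht₁ hδ
  have hgap : 0 < c * (1 - 2 ^ (D - Q)) :=
    mul_pos hc (sub_pos.2 (Real.rpow_lt_one_of_one_lt_of_neg one_lt_two (sub_neg.2 hDQ)))
  rw [ENNReal.tendsto_nhds_top_iff_nat]
  intro n
  obtain ⟨N, hN⟩ := exists_nat_gt (n / (c * (1 - 2 ^ (D - Q))))
  have hbound : Tendsto (fun σ : ℝ => N * (c * (1 - 2 ^ (σ - Q)) * (t₀ / 2 ^ N) ^ (σ - D)))
      (𝓝[>] D) (𝓝 (N * (c * (1 - 2 ^ (D - Q))))) := by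
    have hcont : Continuous fun σ : ℝ => N * (c * (1 - 2 ^ (σ - Q)) * (t₀ / 2 ^ N) ^ (σ - D)) := by
      fun_prop (disch := positivity)
    simpa using (hcont.tendsto D).mono_left nhdsWithin_le_nhds
  filter_upwards [hbound.eventually (eventually_gt_nhds ((div_lt_iff₀ hgap).1 hN)),
    self_mem_nhdsWithin, mem_nhdsWithin_of_mem_nhds (Iio_mem_nhds hDQ)] with σ hnσ hDσ hσQ
  calc (n : ℝ≥0∞) = ENNReal.ofReal n := (ENNReal.ofReal_natCast n).symm
    _ < _ := (ENNReal.ofReal_lt_ofReal_iff (n.cast_nonneg.trans_lt hnσ)).2 hnσ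
    _ ≤ _ := ofReal_le_lintegral_infDist_rpow hc.le ht₀ (min_le_right _ _)
        (fun t ht => hlow ⟨ht.1, ht.2.trans (min_le_left _ _)⟩) hDσ.le hσQ.le N

/-- If the Minkowski dimension `D := dim_B A` exists, `D < Q`, and `M_*^D(A) > 0`,
then `ζ_A(s) → +∞` as the real variable `s → D⁺`. -/
theorem stmt5 {X : Type*} [MetricSpace X] [MeasurableSpace X] [BorelSpace X]
    (μ : Measure X) (Q K : ℝ) (hQ : 0 < Q) (hreg : IsAhlfors μ Q K)
    (A : Set X) (hne : A.Nonempty) (hbd : Bornology.IsBounded A)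
    (δ : ℝ) (hδ : 0 < δ)
    (hdim : uDimB μ Q A = lDimB μ Q A) (hDQ : uDimB μ Q A < Q)
    (hpos : 0 < lContent μ Q (uDimB μ Q A) A) :
    Tendsto (fun σ : ℝ =>
        ∫⁻ x in cthickening δ A, ENNReal.ofReal (infDist x A) ^ (σ - Q) ∂μ)
      (𝓝[>] (uDimB μ Q A)) (𝓝 ⊤) :=
  stmt5_general μ Q A δ hδ hDQ hpos
end
end

section
/- Let (X, d, μ) be an Ahlfors regular metric measure space of dimension Q, let Ω be an open subset of X with μ(Ω) < ∞, and let A ⊆ X be nonempty with Ω ⊆ A_δ for some δ > 0. Assume the relative Minkowski dimension D := dim_B(A, Ω) exists (upper and lower relative Minkowski dimensions coincide), D < Q, and the relative lower Minkowski content satisfies M_*^D(A, Ω) > 0. Then the relative distance zeta function ζ_A(s, Ω) = ∫_Ω d(x,A)^{s−Q} dμ(x) tends to +∞ as the real variable s converges to D from the right. -/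
open MeasureTheory Metric Filter Set Topology ENNReal

noncomputable section

/-- The upper `r`-dimensional Minkowski content of `A` relative to `Ω`:
`M^{*r}(A, Ω) = limsup_{t→0⁺} μ(A_t ∩ Ω) / t^(Q-r)`. -/
def uContentRel {X : Type*} [MetricSpace X] [MeasurableSpace X] (μ : Measure X)
    (Q r : ℝ) (A Ω : Set X) : ℝ≥0∞ :=
  Filter.limsup (fun t : ℝ => μ (cthickening t A ∩ Ω) / ENNReal.ofReal (t ^ (Q - r)))
    (𝓝[>] 0)

/-- The lower `r`-dimensional Minkowski content of `A` relative to `Ω`. -/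
def lContentRel {X : Type*} [MetricSpace X] [MeasurableSpace X] (μ : Measure X)
    (Q r : ℝ) (A Ω : Set X) : ℝ≥0∞ :=
  Filter.liminf (fun t : ℝ => μ (cthickening t A ∩ Ω) / ENNReal.ofReal (t ^ (Q - r)))
    (𝓝[>] 0)

/-- The relative upper Minkowski dimension `dim̄_B(A, Ω) = inf { r : M^{*r}(A, Ω) = 0 }`. -/
def uDimRel {X : Type*} [MetricSpace X] [MeasurableSpace X] (μ : Measure X)
    (Q : ℝ) (A Ω : Set X) : ℝ :=
  sInf {r : ℝ | uContentRel μ Q r A Ω = 0}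

/-- The relative lower Minkowski dimension. -/
def lDimRel {X : Type*} [MetricSpace X] [MeasurableSpace X] (μ : Measure X)
    (Q : ℝ) (A Ω : Set X) : ℝ :=
  sInf {r : ℝ | lContentRel μ Q r A Ω = 0}

/-!
Write `d = infDist · A`, `b = σ - Q < 0` and `tₖ = t₀ / 2 ^ k`. Since `tₖ ^ b` grows
geometrically in `k`, `(1 - 2 ^ b) ∑_{k : d ≤ tₖ} tₖ ^ b ≤ d ^ b` pointwise (on `closure A` the
right side is `⊤`), and integrating over `Ω` gives
`(1 - 2 ^ b) ∑ₖ tₖ ^ b μ(A_{tₖ} ∩ Ω) ≤ ζ_A(σ, Ω)`. A positive lower content `c` at `D` yields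
`μ(A_t ∩ Ω) ≥ c t ^ (Q - D)` for small `t`, so the `k`-th term is at least
`c (1 - 2 ^ (σ - Q)) tₖ ^ (σ - D)`, which tends to `c (1 - 2 ^ (D - Q)) > 0` as `σ → D⁺`.
Keeping `N` terms, `ζ_A(σ, Ω)` is eventually at least of order `N` for every `N`.
-/

lemma one_sub_inv_mul_geom_sum_le {x : ℝ} (hx : 1 ≤ x) (m : ℕ) :
    (1 - x⁻¹) * ∑ k ∈ Finset.range (m + 1), x ^ k ≤ x ^ m := by
  have hx0 : 0 < x := by linarith
  calc (1 - x⁻¹) * ∑ k ∈ Finset.range (m + 1), x ^ k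
      = x⁻¹ * ((∑ k ∈ Finset.range (m + 1), x ^ k) * (x - 1)) := by field_simp
    _ = x⁻¹ * x ^ (m + 1) - x⁻¹ := by rw [geom_sum_mul]; ring
    _ ≤ x ^ m := by
        rw [pow_succ, mul_comm, mul_assoc, mul_inv_cancel₀ hx0.ne', mul_one]
        linarith [inv_pos.2 hx0]

lemma one_sub_two_rpow_nonneg {b : ℝ} (hb : b ≤ 0) : 0 ≤ 1 - (2 : ℝ) ^ b :=
  sub_nonneg.2 (Real.rpow_le_one_of_one_le_of_nonpos one_le_two hb)

lemma div_two_pow_rpow {t : ℝ} (ht : 0 ≤ t) (b : ℝ) (k : ℕ) :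
    (t / 2 ^ k) ^ b = t ^ b * ((2 ^ b)⁻¹) ^ k := by
  rw [Real.div_rpow ht (by positivity), ← Real.rpow_pow_comm zero_le_two, inv_pow, div_eq_mul_inv]

lemma one_sub_two_rpow_mul_sum_range_le {t b : ℝ} (ht : 0 ≤ t) (hb : b ≤ 0) (m : ℕ) :
    (1 - 2 ^ b) * ∑ k ∈ Finset.range (m + 1), (t / 2 ^ k) ^ b ≤ (t / 2 ^ m) ^ b := by
  have hinv : 1 ≤ ((2 : ℝ) ^ b)⁻¹ :=
    one_le_inv_iff₀.2 ⟨by positivity, Real.rpow_le_one_of_one_le_of_nonpos one_le_two hb⟩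
  simp only [div_two_pow_rpow ht, ← Finset.mul_sum]
  have hgeom :=
    mul_le_mul_of_nonneg_left (one_sub_inv_mul_geom_sum_le hinv m) (Real.rpow_nonneg ht b)
  rw [inv_inv] at hgeom
  linarith

lemma sum_one_sub_two_rpow_mul_le_rpow {d t b : ℝ} (hd : 0 < d) (ht : 0 ≤ t) (hb : b ≤ 0)
    {S : Finset ℕ} (hS : ∀ k ∈ S, d ≤ t / 2 ^ k) :
    ∑ k ∈ S, (1 - 2 ^ b) * (t / 2 ^ k) ^ b ≤ d ^ b := by
  rcases S.eq_empty_or_nonempty with rfl | hne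
  · simpa using Real.rpow_nonneg hd.le b
  set m := S.max' hne
  have hsub : S ⊆ Finset.range (m + 1) := fun k hk =>
    Finset.mem_range_succ_iff.2 (S.le_max' k hk)
  calc ∑ k ∈ S, (1 - 2 ^ b) * (t / 2 ^ k) ^ b
      ≤ (1 - 2 ^ b) * ∑ k ∈ Finset.range (m + 1), (t / 2 ^ k) ^ b := by
        rw [← Finset.mul_sum]
        exact mul_le_mul_of_nonneg_left (Finset.sum_le_sum_of_subset_of_nonneg hsub
          fun k _ _ => Real.rpow_nonneg (by positivity) b) (one_sub_two_rpow_nonneg hb)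
    _ ≤ (t / 2 ^ m) ^ b := one_sub_two_rpow_mul_sum_range_le ht hb m
    _ ≤ d ^ b := Real.rpow_le_rpow_of_nonpos hd (hS m (S.max'_mem hne)) hb

lemma ENNReal.tendsto_nhds_top_of_forall_eventually_le {α : Type*} {l : Filter α}
    {f : α → ℝ≥0∞} {g : ℕ → α → ℝ≥0∞} {L : ℕ → ℝ≥0∞} (hL : Tendsto L atTop (𝓝 ⊤))
    (hg : ∀ N, Tendsto (g N) l (𝓝 (L N))) (hgf : ∀ N, ∀ᶠ a in l, g N a ≤ f a) :
    Tendsto f l (𝓝 ⊤) := by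
  refine ENNReal.tendsto_nhds_top_iff_nat.2 fun n => ?_
  obtain ⟨N, hN⟩ := (hL.eventually (lt_mem_nhds (natCast_lt_top n))).exists
  filter_upwards [(hg N).eventually (lt_mem_nhds hN), hgf N] with a h₁ h₂
  exact h₁.trans_le h₂

section

variable {X : Type*} [MetricSpace X]

lemma infDist_le_of_mem_cthickening {A : Set X} {t : ℝ} {x : X}
    (ht : 0 ≤ t) (hx : x ∈ cthickening t A) : infDist x A ≤ t :=
  ENNReal.toReal_le_of_le_ofReal ht (mem_cthickening_iff.1 hx)

lemma sum_indicator_cthickening_le_infDist_rpow {A : Set X} {t b : ℝ} (ht : 0 ≤ t) (hb : b < 0)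
    (N : ℕ) (x : X) :
    ∑ k ∈ Finset.range N, (cthickening (t / 2 ^ k) A).indicator
        (fun _ => ENNReal.ofReal ((1 - 2 ^ b) * (t / 2 ^ k) ^ b)) x
      ≤ ENNReal.ofReal (infDist x A) ^ b := by
  classical
  rcases (infDist_nonneg (x := x) (s := A)).eq_or_lt with hd | hd
  · rw [← hd, ENNReal.ofReal_zero, ENNReal.zero_rpow_of_neg hb]
    exact le_top
  have hS : ∀ k ∈ (Finset.range N).filter (fun k => x ∈ cthickening (t / 2 ^ k) A),
      infDist x A ≤ t / 2 ^ k := fun k hk =>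
    infDist_le_of_mem_cthickening (by positivity) (Finset.mem_filter.1 hk).2
  rw [Finset.sum_indicator_eq_sum_filter, ENNReal.ofReal_rpow_of_pos hd,
    ← ENNReal.ofReal_sum_of_nonneg]
  · exact ENNReal.ofReal_le_ofReal (sum_one_sub_two_rpow_mul_le_rpow hd ht hb.le hS)
  · intro k _
    exact mul_nonneg (one_sub_two_rpow_nonneg hb.le) (Real.rpow_nonneg (by positivity) b)

variable [MeasurableSpace X]

lemma exists_mul_rpow_le_measure_of_lt_lContentRel {μ : Measure X} {Q D : ℝ} {A Ω : Set X}
    {c : ℝ≥0∞} (hc : c < lContentRel μ Q D A Ω) :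
    ∃ t₀ > 0, ∀ t ∈ Ioc 0 t₀, c * ENNReal.ofReal (t ^ (Q - D)) ≤ μ (cthickening t A ∩ Ω) := by
  obtain ⟨t₀, ht₀, hsub⟩ :=
    mem_nhdsGT_iff_exists_Ioc_subset.1 (eventually_lt_of_lt_liminf hc)
  refine ⟨t₀, ht₀, fun t ht => ?_⟩
  have hpos : ENNReal.ofReal (t ^ (Q - D)) ≠ 0 :=
    (ENNReal.ofReal_pos.2 (Real.rpow_pos_of_pos ht.1 _)).ne'
  exact (ENNReal.le_div_iff_mul_le (Or.inl hpos) (Or.inl ofReal_ne_top)).1 (hsub ht).le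

variable [OpensMeasurableSpace X]

lemma sum_mul_measure_cthickening_le_lintegral (μ : Measure X) (A Ω : Set X) {t b : ℝ}
    (ht : 0 ≤ t) (hb : b < 0) (N : ℕ) :
    ∑ k ∈ Finset.range N, ENNReal.ofReal ((1 - 2 ^ b) * (t / 2 ^ k) ^ b) *
        μ (cthickening (t / 2 ^ k) A ∩ Ω)
      ≤ ∫⁻ x in Ω, ENNReal.ofReal (infDist x A) ^ b ∂μ := by
  have hmeas (k : ℕ) : MeasurableSet (cthickening (t / 2 ^ k) A) :=
    isClosed_cthickening.measurableSet
  calc _ = ∫⁻ x in Ω, ∑ k ∈ Finset.range N, (cthickening (t / 2 ^ k) A).indicator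
          (fun _ => ENNReal.ofReal ((1 - 2 ^ b) * (t / 2 ^ k) ^ b)) x ∂μ := by
        rw [lintegral_finsetSum _ fun k _ => measurable_const.indicator (hmeas k)]
        simp only [lintegral_indicator_const (hmeas _), Measure.restrict_apply (hmeas _)]
    _ ≤ _ := lintegral_mono fun x => sum_indicator_cthickening_le_infDist_rpow ht hb N x

lemma mul_sum_le_lintegral_infDist_rpow {μ : Measure X} {Q D σ t₀ : ℝ} {A Ω : Set X} {c : ℝ≥0∞}
    (ht₀ : 0 < t₀)
    (hbound : ∀ t ∈ Ioc 0 t₀, c * ENNReal.ofReal (t ^ (Q - D)) ≤ μ (cthickening t A ∩ Ω))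
    (hσ : σ < Q) (N : ℕ) :
    c * ENNReal.ofReal (∑ k ∈ Finset.range N, (1 - 2 ^ (σ - Q)) * (t₀ / 2 ^ k) ^ (σ - D))
      ≤ ∫⁻ x in Ω, ENNReal.ofReal (infDist x A) ^ (σ - Q) ∂μ := by
  have hw : 0 ≤ 1 - (2 : ℝ) ^ (σ - Q) := one_sub_two_rpow_nonneg (by linarith)
  refine le_trans ?_ (sum_mul_measure_cthickening_le_lintegral μ A Ω ht₀.le (by linarith) N)
  rw [ENNReal.ofReal_sum_of_nonneg fun k _ => mul_nonneg hw (by positivity), Finset.mul_sum]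
  refine Finset.sum_le_sum fun k _ => ?_
  have htk : 0 < t₀ / 2 ^ k := by positivity
  calc c * ENNReal.ofReal ((1 - 2 ^ (σ - Q)) * (t₀ / 2 ^ k) ^ (σ - D))
      = ENNReal.ofReal ((1 - 2 ^ (σ - Q)) * (t₀ / 2 ^ k) ^ (σ - Q)) *
          (c * ENNReal.ofReal ((t₀ / 2 ^ k) ^ (Q - D))) := by
        have hsplit : (t₀ / 2 ^ k) ^ (σ - D) = (t₀ / 2 ^ k) ^ (σ - Q) * (t₀ / 2 ^ k) ^ (Q - D) := by
          rw [← Real.rpow_add htk]; ring_nf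
        rw [hsplit, ← mul_assoc, ENNReal.ofReal_mul (mul_nonneg hw (by positivity))]
        ring
    _ ≤ _ := by
        gcongr
        exact hbound _ ⟨htk, div_le_self ht₀.le (one_le_pow₀ one_le_two)⟩

theorem tendsto_lintegral_infDist_rpow_nhdsGT_top (μ : Measure X) (A Ω : Set X) {Q D : ℝ}
    (hDQ : D < Q) (hpos : 0 < lContentRel μ Q D A Ω) :
    Tendsto (fun σ : ℝ => ∫⁻ x in Ω, ENNReal.ofReal (infDist x A) ^ (σ - Q) ∂μ)
      (𝓝[>] D) (𝓝 ⊤) := by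
  obtain ⟨c, hc₀, hc⟩ := exists_between hpos
  obtain ⟨t₀, ht₀, hbound⟩ := exists_mul_rpow_le_measure_of_lt_lContentRel hc
  set g : ℝ → ℝ := fun σ => 1 - 2 ^ (σ - Q)
  have hg : 0 < g D := sub_pos.2 (Real.rpow_lt_one_of_one_lt_of_neg one_lt_two (by linarith))
  set ε := c * ENNReal.ofReal (g D)
  have hε : ε ≠ 0 := mul_ne_zero hc₀.ne' (ENNReal.ofReal_pos.2 hg).ne'
  refine ENNReal.tendsto_nhds_top_of_forall_eventually_le
    (g := fun N σ => c * ENNReal.ofReal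
      (∑ k ∈ Finset.range N, g σ * (t₀ / 2 ^ k) ^ (σ - D)))
    (L := fun N => N * ε)
    (by simpa only [ENNReal.top_mul hε] using
      ENNReal.Tendsto.mul_const (b := ε) ENNReal.tendsto_nat_nhds_top (Or.inl top_ne_zero))
    (fun N => ?_) (fun N => ?_)
  · have hcont : Continuous fun σ => ∑ k ∈ Finset.range N, g σ * (t₀ / 2 ^ k) ^ (σ - D) := by
      fun_prop (disch := positivity)
    have hD : c * ENNReal.ofReal (∑ k ∈ Finset.range N, g D * (t₀ / 2 ^ k) ^ (D - D)) = N * ε := by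
      simp only [sub_self, Real.rpow_zero, mul_one, Finset.sum_const, Finset.card_range,
        nsmul_eq_mul, ENNReal.ofReal_mul (Nat.cast_nonneg N), ENNReal.ofReal_natCast, ε]
      ring
    rw [← hD]
    exact ENNReal.Tendsto.const_mul (((ENNReal.continuous_ofReal.comp hcont).tendsto D).mono_left
      nhdsWithin_le_nhds) (Or.inr hc.ne_top)
  · filter_upwards [Ioo_mem_nhdsGT hDQ] with σ hσ
    exact mul_sum_le_lintegral_infDist_rpow ht₀ hbound hσ.2 N

end

theorem stmt18_general {X : Type*} [MetricSpace X] [MeasurableSpace X] [BorelSpace X]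
    (μ : Measure X) (Q : ℝ)
    (Ω : Set X)
    (A : Set X)
    (hDQ : uDimRel μ Q A Ω < Q)
    (hpos : 0 < lContentRel μ Q (uDimRel μ Q A Ω) A Ω) :
    Tendsto (fun σ : ℝ => ∫⁻ x in Ω, ENNReal.ofReal (infDist x A) ^ (σ - Q) ∂μ)
      (𝓝[>] (uDimRel μ Q A Ω)) (𝓝 ⊤) :=
  tendsto_lintegral_infDist_rpow_nhdsGT_top μ A Ω hDQ hpos

/-- If the relative Minkowski dimension `D := dim_B(A, Ω)` exists, `D < Q`, and the
relative lower Minkowski content `M_*^D(A, Ω)` is positive, then the relative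
distance zeta function `ζ_A(s, Ω)` tends to `+∞` as the real variable `s → D⁺`. -/
theorem stmt18 {X : Type*} [MetricSpace X] [MeasurableSpace X] [BorelSpace X]
    (μ : Measure X) (Q K : ℝ) (hQ : 0 < Q) (hreg : IsAhlfors μ Q K)
    (Ω : Set X) (hΩopen : IsOpen Ω) (hΩfin : μ Ω < ⊤)
    (A : Set X) (hne : A.Nonempty)
    (δ : ℝ) (hδ : 0 < δ) (hΩA : Ω ⊆ cthickening δ A)
    (hdim : uDimRel μ Q A Ω = lDimRel μ Q A Ω) (hDQ : uDimRel μ Q A Ω < Q)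
    (hpos : 0 < lContentRel μ Q (uDimRel μ Q A Ω) A Ω) :
    Tendsto (fun σ : ℝ => ∫⁻ x in Ω, ENNReal.ofReal (infDist x A) ^ (σ - Q) ∂μ)
      (𝓝[>] (uDimRel μ Q A Ω)) (𝓝 ⊤) :=
  stmt18_general μ Q Ω A hDQ hpos

end
end
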